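/- Suppose ν is even, P = Pᵀ, C is symmetric negative definite, and −q_i Q ⪯ C for every i. Define A_{ν/2,ν/2}(z) := (P^{ν/2} ⊗ I_n) x⋆((P^{ν/2} ⊗ I_n) z). Then for any initial vector z_0 ∈ ℝ^{Nn}, the Picard–Banach iteration z_{k+1} := A_{ν/2,ν/2}(z_k) is such that the sequence a_k := (P^{ν/2} ⊗ I_n) z_k converges as k → ∞ to a fixed point of A_ν. (Theorem 3, statement 3.) -/

import Mathlib

/-!
Put `S = I_N ⊗ (-C)`. Adding the variational inequalities of two optimal responses and using
`q_i Q ⪰ -C` shows that every best response `x^{i⋆}`, hence the stacked map `x⋆`, is firmly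
nonexpansive for the inner product `⟨u, S v⟩`. The matrix `K = P^{ν/2} ⊗ I_n` is symmetric,
doubly stochastic and commutes with `S`, so it is `S`-nonexpansive and `A_{ν/2,ν/2} = K ∘ x⋆ ∘ K`
is again `S`-firmly nonexpansive, with bounded range because the `X^i` are compact.
In the coordinates `u = L z`, where `S = Lᵀ L`, such a map is firmly nonexpansive on Euclidean
space: it has a fixed point (fixed points of the contractions `(1 - ε) • T` make `‖T x - x‖`
arbitrarily small on a compact ball), its Picard iterates are Fejér monotone with square-summable
steps, and so they converge to a fixed point `z̄`. Finally `a_k = K z_k → K z̄`, and `A_ν (K z̄) = K (A_{ν/2,ν/2} z̄) = K z̄`.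
-/

open Matrix Filter Topology Finset
open scoped Kronecker

noncomputable section

/-- Euclidean norm of a finitely-indexed real vector. -/
def eunorm {ι : Type*} [Fintype ι] (x : ι → ℝ) : ℝ := Real.sqrt (x ⬝ᵥ x)

/-- `S`-weighted norm `‖x‖_S = √(xᵀ S x)`. -/
def wnorm {ι : Type*} [Fintype ι] (S : Matrix ι ι ℝ) (x : ι → ℝ) : ℝ :=
  Real.sqrt (x ⬝ᵥ S.mulVec x)

/-- Quadratic cost `J(x,z) = q·xᵀQx + 2(Cz+c)ᵀx`. -/
def cost {n : ℕ} (Q C : Matrix (Fin n) (Fin n) ℝ) (qi : ℝ) (ci : Fin n → ℝ)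
    (x z : Fin n → ℝ) : ℝ :=
  qi * (x ⬝ᵥ Q.mulVec x) + 2 * ((C.mulVec z + ci) ⬝ᵥ x)

/-- `xst` is the optimal-response map: for every `z`, `xst z` minimizes the cost over `X`. -/
def IsOptResp {n : ℕ} (X : Set (Fin n → ℝ)) (Q C : Matrix (Fin n) (Fin n) ℝ)
    (qi : ℝ) (ci : Fin n → ℝ) (xst : (Fin n → ℝ) → (Fin n → ℝ)) : Prop :=
  ∀ z, xst z ∈ X ∧ ∀ y ∈ X, cost Q C qi ci (xst z) z ≤ cost Q C qi ci y z

/-- Stacked optimal responses `x⋆(z) = (x^{1⋆}(z^1);…;x^{N⋆}(z^N))`. -/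
def extMap {n N : ℕ} (xstar : Fin N → (Fin n → ℝ) → (Fin n → ℝ))
    (z : Fin N × Fin n → ℝ) : Fin N × Fin n → ℝ :=
  fun p => xstar p.1 (fun j => z (p.1, j)) p.2

/-- Extended aggregation map `A_ν(z) = (P^ν ⊗ I_n) x⋆(z)`. -/
def aggMap {n N : ℕ} (P : Matrix (Fin N) (Fin N) ℝ) (ν : ℕ)
    (xstar : Fin N → (Fin n → ℝ) → (Fin n → ℝ)) (z : Fin N × Fin n → ℝ) :
    Fin N × Fin n → ℝ :=
  ((P ^ ν) ⊗ₖ (1 : Matrix (Fin n) (Fin n) ℝ)).mulVec (extMap xstar z)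

/-- The matrix `(1/N)·1_N 1_Nᵀ` with all entries `1/N`. -/
def avgMat (N : ℕ) : Matrix (Fin N) (Fin N) ℝ := Matrix.of fun _ _ => (N : ℝ)⁻¹

/-- Mean-field aggregation map `A(z) = ((1/N)·1 1ᵀ ⊗ I_n) x⋆(z)`. -/
def meanAgg {n N : ℕ} (xstar : Fin N → (Fin n → ℝ) → (Fin n → ℝ))
    (z : Fin N × Fin n → ℝ) : Fin N × Fin n → ℝ :=
  ((avgMat N) ⊗ₖ (1 : Matrix (Fin n) (Fin n) ℝ)).mulVec (extMap xstar z)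

/-- Maximum-row-sum matrix norm `‖A‖_∞`. -/
def rowSumNorm {N : ℕ} (A : Matrix (Fin N) (Fin N) ℝ) : ℝ := ⨆ i, ∑ j, |A i j|

/-- Spectral norm (ℓ²-operator norm) of a real matrix. -/
def specNorm {ι : Type*} [Fintype ι] [DecidableEq ι] (P : Matrix ι ι ℝ) : ℝ :=
  ‖LinearMap.toContinuousLinearMap (Matrix.toEuclideanLin P)‖

/-- Map `A_{m,m}(z) = (P^m ⊗ I_n) x⋆((P^m ⊗ I_n) z)`. -/
def halfAgg {n N : ℕ} (P : Matrix (Fin N) (Fin N) ℝ) (m : ℕ)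
    (xstar : Fin N → (Fin n → ℝ) → (Fin n → ℝ)) (z : Fin N × Fin n → ℝ) :
    Fin N × Fin n → ℝ :=
  ((P ^ m) ⊗ₖ (1 : Matrix (Fin n) (Fin n) ℝ)).mulVec
    (extMap xstar (((P ^ m) ⊗ₖ (1 : Matrix (Fin n) (Fin n) ℝ)).mulVec z))

open Set Bornology Function

theorem nonneg_of_forall_mem_Ioo_nonneg_add_mul {a b : ℝ}
    (h : ∀ t ∈ Ioo (0 : ℝ) 1, 0 ≤ a + t * b) : 0 ≤ a := by
  have hlim : Tendsto (fun t : ℝ => a + t * b) (𝓝[>] 0) (𝓝 a) :=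
    ((continuous_const.add (continuous_id.mul continuous_const)).tendsto' 0 a
      (by simp)).mono_left nhdsWithin_le_nhds
  exact ge_of_tendsto hlim (eventually_of_mem (Ioo_mem_nhdsGT one_pos) h)

section FirmlyNonexpansive

variable {E : Type*} [NormedAddCommGroup E] [InnerProductSpace ℝ E]

def FirmlyNonexpansive (T : E → E) : Prop :=
  ∀ x y, ‖T x - T y‖ ^ 2 ≤ inner ℝ (T x - T y) (x - y)

theorem FirmlyNonexpansive.lipschitzWith_one {T : E → E} (hT : FirmlyNonexpansive T) :
    LipschitzWith 1 T := by
  refine LipschitzWith.of_dist_le_mul fun x y => ?_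
  rw [dist_eq_norm, dist_eq_norm, NNReal.coe_one, one_mul]
  have h := (hT x y).trans (real_inner_le_norm _ _)
  rw [sq] at h
  rcases (norm_nonneg (T x - T y)).eq_or_lt with h0 | h0
  · exact h0 ▸ norm_nonneg _
  · exact le_of_mul_le_mul_left h h0

theorem FirmlyNonexpansive.norm_sub_sq_add_norm_sub_sq_le {T : E → E} (hT : FirmlyNonexpansive T)
    {p : E} (hp : IsFixedPt T p) (x : E) :
    ‖T x - p‖ ^ 2 + ‖T x - x‖ ^ 2 ≤ ‖x - p‖ ^ 2 := by
  have h := hT x p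
  rw [hp.eq] at h
  have hsplit : T x - x = (T x - p) - (x - p) := (sub_sub_sub_cancel_right _ _ _).symm
  rw [hsplit, norm_sub_sq_real (T x - p)]
  linarith

theorem exists_isFixedPt_of_lipschitzWith_one_of_isBounded_range {F : Type*}
    [NormedAddCommGroup F] [NormedSpace ℝ F] [ProperSpace F] {T : F → F} (hT : LipschitzWith 1 T)
    (hb : IsBounded (range T)) : ∃ w, IsFixedPt T w := by
  obtain ⟨ρ, hρ⟩ := isBounded_iff_forall_norm_le.1 hb
  have hρ' : ∀ x, ‖T x‖ ≤ ρ := fun x => hρ _ (mem_range_self x)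
  -- a fixed point of the contraction `(1 - ε) • T` is an `ερ`-approximate fixed point of `T`
  have happrox : ∀ ε ∈ Ioo (0 : ℝ) 1, ∃ x ∈ Metric.closedBall (0 : F) ρ, ‖T x - x‖ ≤ ε * ρ := by
    rintro ε ⟨hε0, hε1⟩
    have hc : ContractingWith (‖1 - ε‖₊ * 1) fun x => (1 - ε) • T x := by
      refine ⟨?_, (lipschitzWith_smul (1 - ε)).comp hT⟩
      rw [mul_one, ← NNReal.coe_lt_coe, coe_nnnorm, Real.norm_of_nonneg (by linarith)]
      simpa using hε0
    set x := ContractingWith.fixedPoint _ hc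
    have hx : (1 - ε) • T x = x := hc.fixedPoint_isFixedPt
    refine ⟨x, ?_, ?_⟩
    · rw [mem_closedBall_zero_iff, ← hx, norm_smul, Real.norm_of_nonneg (by linarith)]
      nlinarith [hρ' x, norm_nonneg (T x)]
    · nth_rewrite 2 [← hx]
      rw [show T x - (1 - ε) • T x = ε • T x by module, norm_smul, Real.norm_of_nonneg hε0.le]
      exact mul_le_mul_of_nonneg_left (hρ' x) hε0.le
  obtain ⟨w, -, hw⟩ := (isCompact_closedBall (0 : F) ρ).exists_isMinOn (f := fun x => ‖T x - x‖)
    (Metric.nonempty_closedBall.2 ((norm_nonneg _).trans (hρ' 0)))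
    (hT.continuous.sub continuous_id).norm.continuousOn
  refine ⟨w, (norm_sub_eq_zero_iff.1 (le_antisymm ?_ (norm_nonneg _)))⟩
  refine neg_nonneg.1 (nonneg_of_forall_mem_Ioo_nonneg_add_mul (b := ρ) fun ε hε => ?_)
  obtain ⟨x, hxρ, hx⟩ := happrox ε hε
  linarith [show ‖T w - w‖ ≤ ‖T x - x‖ from hw hxρ]

theorem tendsto_of_antitone_dist_of_mapClusterPt {α : Type*} [PseudoMetricSpace α] {x : ℕ → α}
    {w : α} (hanti : Antitone fun k => dist (x k) w) (hw : MapClusterPt w atTop x) :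
    Tendsto x atTop (𝓝 w) := by
  refine Metric.tendsto_atTop.2 fun ε hε => ?_
  obtain ⟨k, hk⟩ := (mapClusterPt_iff_frequently.1 hw _ (Metric.ball_mem_nhds w hε)).exists
  exact ⟨k, fun j hj => (hanti hj).trans_lt hk⟩

theorem FirmlyNonexpansive.tendsto_iterate_of_isFixedPt [ProperSpace E] {T : E → E}
    (hT : FirmlyNonexpansive T) {p : E} (hp : IsFixedPt T p) (x₀ : E) :
    ∃ w, IsFixedPt T w ∧ Tendsto (fun k => T^[k] x₀) atTop (𝓝 w) := by
  set x : ℕ → E := fun k => T^[k] x₀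
  have hx : ∀ k, x (k + 1) = T (x k) := fun k => iterate_succ_apply' T k x₀
  have hfejer : ∀ q, IsFixedPt T q → Antitone fun k => dist (x k) q := fun q hq =>
    antitone_nat_of_succ_le fun k => by
      calc dist (x (k + 1)) q = dist (T (x k)) (T q) := by rw [hx, hq.eq]
        _ ≤ dist (x k) q := by simpa using hT.lipschitzWith_one.dist_le_mul (x k) q
  -- the squared steps are summable, being bounded by the telescoping decrease of `‖x k - p‖ ^ 2`
  have hreg : Tendsto (fun k => ‖T (x k) - x k‖ ^ 2) atTop (𝓝 0) := by
    have hstep : ∀ k, ‖T (x k) - x k‖ ^ 2 ≤ ‖x k - p‖ ^ 2 - ‖x (k + 1) - p‖ ^ 2 := fun k => by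
      rw [hx]; linarith [hT.norm_sub_sq_add_norm_sub_sq_le hp (x k)]
    refine (summable_of_sum_range_le (c := ‖x₀ - p‖ ^ 2) (fun _ => by positivity)
      fun n => ?_).tendsto_atTop_zero
    calc ∑ k ∈ range n, ‖T (x k) - x k‖ ^ 2
        ≤ ∑ k ∈ range n, (‖x k - p‖ ^ 2 - ‖x (k + 1) - p‖ ^ 2) := sum_le_sum fun k _ => hstep k
      _ = ‖x 0 - p‖ ^ 2 - ‖x n - p‖ ^ 2 := sum_range_sub' _ n
      _ ≤ ‖x₀ - p‖ ^ 2 := by simp [x]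
  obtain ⟨w, -, hw⟩ := (isCompact_closedBall p (dist x₀ p)).exists_mapClusterPt (f := atTop)
    (tendsto_principal.2 (Eventually.of_forall fun k => hfejer p hp (Nat.zero_le k)))
  have hfix : IsFixedPt T w := by
    have hcl := hw.tendsto_comp
      (((hT.lipschitzWith_one.continuous.sub continuous_id).norm.pow 2).tendsto w)
    have h0 : ‖T w - w‖ ^ 2 = 0 := eq_of_nhds_neBot (hcl.clusterPt.mono hreg)
    exact sub_eq_zero.1 (norm_eq_zero.1 (pow_eq_zero_iff two_ne_zero |>.1 h0))
  exact ⟨w, hfix, tendsto_of_antitone_dist_of_mapClusterPt (hfejer w hfix) hw⟩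

theorem FirmlyNonexpansive.tendsto_iterate [ProperSpace E] {T : E → E}
    (hT : FirmlyNonexpansive T) (hb : IsBounded (range T)) (x₀ : E) :
    ∃ w, IsFixedPt T w ∧ Tendsto (fun k => T^[k] x₀) atTop (𝓝 w) :=
  let ⟨_, hp⟩ := exists_isFixedPt_of_lipschitzWith_one_of_isBounded_range hT.lipschitzWith_one hb
  hT.tendsto_iterate_of_isFixedPt hp x₀

end FirmlyNonexpansive

section WeightedGeometry

variable {ι κ : Type*} [Fintype ι] [Fintype κ]

def FirmlyNonexpansiveWrt (S : Matrix ι ι ℝ) (F : (ι → ℝ) → ι → ℝ) : Prop :=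
  ∀ x y, (F x - F y) ⬝ᵥ S *ᵥ (F x - F y) ≤ (F x - F y) ⬝ᵥ S *ᵥ (x - y)

theorem Matrix.dotProduct_transpose_mul_mulVec (L : Matrix ι ι ℝ) (a b : ι → ℝ) :
    a ⬝ᵥ (Lᵀ * L) *ᵥ b = L *ᵥ a ⬝ᵥ L *ᵥ b := by
  rw [← mulVec_mulVec, dotProduct_mulVec, vecMul_transpose]

theorem Matrix.kronecker_mem_doublyStochastic [DecidableEq ι] [DecidableEq κ] {R : Type*}
    [Semiring R] [PartialOrder R] [IsOrderedRing R] {M : Matrix κ κ R} {N : Matrix ι ι R}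
    (hM : M ∈ doublyStochastic R κ) (hN : N ∈ doublyStochastic R ι) :
    M ⊗ₖ N ∈ doublyStochastic R (κ × ι) := by
  rw [mem_doublyStochastic_iff_sum] at hM hN ⊢
  refine ⟨fun p q => mul_nonneg (hM.1 _ _) (hN.1 _ _), fun p => ?_, fun q => ?_⟩
  · simp [Fintype.sum_prod_type, ← mul_sum, hM.2.1, hN.2.1]
  · simp [Fintype.sum_prod_type, ← mul_sum, hM.2.2, hN.2.2]

theorem Matrix.mulVec_dotProduct_mulVec_le_of_mem_doublyStochastic [DecidableEq ι]
    {M : Matrix ι ι ℝ} (hM : M ∈ doublyStochastic ℝ ι) (v : ι → ℝ) : M *ᵥ v ⬝ᵥ M *ᵥ v ≤ v ⬝ᵥ v := by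
  have hjensen : ∀ i, (M *ᵥ v) i ^ 2 ≤ ∑ j, M i j * v j ^ 2 := fun i => by
    simpa [mulVec, dotProduct] using (even_two.convexOn_pow (𝕜 := ℝ)).map_sum_le
      (fun j _ => nonneg_of_mem_doublyStochastic hM) (sum_row_of_mem_doublyStochastic hM i)
      (fun j _ => mem_univ (v j))
  calc M *ᵥ v ⬝ᵥ M *ᵥ v = ∑ i, (M *ᵥ v) i ^ 2 := by simp [dotProduct, sq]
    _ ≤ ∑ i, ∑ j, M i j * v j ^ 2 := sum_le_sum fun i _ => hjensen i
    _ = ∑ j, (∑ i, M i j) * v j ^ 2 := by rw [sum_comm]; simp [sum_mul]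
    _ = v ⬝ᵥ v := by simp [sum_col_of_mem_doublyStochastic hM, dotProduct, sq]

theorem Matrix.kronecker_one_mulVec_dotProduct_le [DecidableEq ι] [DecidableEq κ] {M : Matrix κ κ ℝ}
    (hM : M ∈ doublyStochastic ℝ κ) {S : Matrix ι ι ℝ} (hS : S.PosSemidef) (w : κ × ι → ℝ) :
    (M ⊗ₖ 1) *ᵥ w ⬝ᵥ (1 ⊗ₖ S) *ᵥ ((M ⊗ₖ 1) *ᵥ w) ≤ w ⬝ᵥ (1 ⊗ₖ S) *ᵥ w := by
  open scoped MatrixOrder in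
  obtain ⟨L, rfl⟩ := CStarAlgebra.nonneg_iff_eq_star_mul_self.mp hS.nonneg
  have hfactor : (1 : Matrix κ κ ℝ) ⊗ₖ (star L * L) = (1 ⊗ₖ L)ᵀ * (1 ⊗ₖ L) := by
    rw [← kroneckerMap_transpose, ← mul_kronecker_mul, transpose_one, one_mul,
      star_eq_conjTranspose, conjTranspose_eq_transpose_of_trivial]
  have hcomm : (1 ⊗ₖ L) * (M ⊗ₖ (1 : Matrix ι ι ℝ)) = (M ⊗ₖ 1) * (1 ⊗ₖ L) := by
    simp only [← mul_kronecker_mul, one_mul, mul_one]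
  rw [hfactor, dotProduct_transpose_mul_mulVec, dotProduct_transpose_mul_mulVec, mulVec_mulVec,
    hcomm, ← mulVec_mulVec]
  exact mulVec_dotProduct_mulVec_le_of_mem_doublyStochastic
    (kronecker_mem_doublyStochastic hM (one_mem _)) _

theorem Matrix.dotProduct_one_kronecker_mulVec [DecidableEq κ] (S : Matrix ι ι ℝ)
    (u v : κ × ι → ℝ) :
    u ⬝ᵥ ((1 : Matrix κ κ ℝ) ⊗ₖ S) *ᵥ v = ∑ i, (fun j => u (i, j)) ⬝ᵥ S *ᵥ fun j => v (i, j) := by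
  simp [dotProduct, mulVec, Fintype.sum_prod_type, one_apply, ite_mul, mul_sum]

theorem FirmlyNonexpansiveWrt.mulVec_comp_mulVec {S K : Matrix ι ι ℝ} {F : (ι → ℝ) → ι → ℝ}
    (hF : FirmlyNonexpansiveWrt S F) (hK : Kᵀ = K) (hKS : Commute K S)
    (hKS_le : ∀ w, K *ᵥ w ⬝ᵥ S *ᵥ (K *ᵥ w) ≤ w ⬝ᵥ S *ᵥ w) :
    FirmlyNonexpansiveWrt S fun z => K *ᵥ F (K *ᵥ z) := fun x y => by
  set D := F (K *ᵥ x) - F (K *ᵥ y)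
  rw [← mulVec_sub]
  calc K *ᵥ D ⬝ᵥ S *ᵥ (K *ᵥ D) ≤ D ⬝ᵥ S *ᵥ D := hKS_le D
    _ ≤ D ⬝ᵥ S *ᵥ (K *ᵥ x - K *ᵥ y) := hF _ _
    _ = K *ᵥ D ⬝ᵥ S *ᵥ (x - y) := by
      rw [← mulVec_sub, mulVec_mulVec, ← hKS.eq, ← mulVec_mulVec, dotProduct_mulVec,
        ← mulVec_transpose, hK]

theorem FirmlyNonexpansiveWrt.tendsto_iterate [DecidableEq ι] {S : Matrix ι ι ℝ} (hS : S.PosDef)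
    {F : (ι → ℝ) → ι → ℝ} (hF : FirmlyNonexpansiveWrt S F) (hb : IsBounded (range F))
    (z₀ : ι → ℝ) : ∃ z, IsFixedPt F z ∧ Tendsto (fun k => F^[k] z₀) atTop (𝓝 z) := by
  open scoped MatrixOrder in
  obtain ⟨L, rfl⟩ := CStarAlgebra.nonneg_iff_eq_star_mul_self.mp hS.posSemidef.nonneg
  have hL : IsUnit L := isUnit_of_mul_isUnit_right hS.isUnit
  -- `z ↦ L z` carries the geometry of `S = Lᵀ L` to the Euclidean one
  let ψ : (ι → ℝ) ≃L[ℝ] EuclideanSpace ℝ ι :=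
    ((toLinearEquiv' L hL.invertible).trans
      (WithLp.linearEquiv 2 ℝ (ι → ℝ)).symm).toContinuousLinearEquiv
  have hψ : ∀ a b, inner ℝ (ψ a) (ψ b) = a ⬝ᵥ (star L * L) *ᵥ b := fun a b => by
    rw [star_eq_conjTranspose, conjTranspose_eq_transpose_of_trivial,
      dotProduct_transpose_mul_mulVec, dotProduct_comm]
    rfl
  set T := ψ ∘ F ∘ ψ.symm
  have hT : FirmlyNonexpansive T := fun u v => by
    obtain ⟨x, rfl⟩ := ψ.surjective u
    obtain ⟨y, rfl⟩ := ψ.surjective v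
    simpa only [T, Function.comp_apply, ContinuousLinearEquiv.symm_apply_apply, ← map_sub,
      ← real_inner_self_eq_norm_sq, hψ] using hF x y
  have hTb : IsBounded (range T) := (ψ.lipschitz.isBounded_image hb).subset <| by
    rw [range_comp]; exact image_mono (range_comp_subset_range _ _)
  obtain ⟨w, hw, hlim⟩ := hT.tendsto_iterate hTb (ψ z₀)
  have hconj : Semiconj ψ F T := fun z => by simp [T]
  refine ⟨ψ.symm w, ψ.injective ?_, ?_⟩
  · rw [ψ.apply_symm_apply]; exact hw
  · refine ((ψ.symm.continuous.tendsto w).comp hlim).congr fun k => ?_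
    simp [← (hconj.iterate_right k) z₀]

end WeightedGeometry

section BestResponse

variable {n N : ℕ}

theorem IsOptResp.variational_ineq {X : Set (Fin n → ℝ)} {Q C : Matrix (Fin n) (Fin n) ℝ}
    {qi : ℝ} {ci : Fin n → ℝ} {xst : (Fin n → ℝ) → Fin n → ℝ} (h : IsOptResp X Q C qi ci xst)
    (hX : Convex ℝ X) (z : Fin n → ℝ) {y : Fin n → ℝ} (hy : y ∈ X) :
    0 ≤ qi * (xst z ⬝ᵥ Q *ᵥ (y - xst z) + (y - xst z) ⬝ᵥ Q *ᵥ xst z)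
      + 2 * ((C *ᵥ z + ci) ⬝ᵥ (y - xst z)) := by
  set x := xst z
  set d := y - x
  refine nonneg_of_forall_mem_Ioo_nonneg_add_mul (b := qi * (d ⬝ᵥ Q *ᵥ d)) fun t ⟨ht0, ht1⟩ => ?_
  have hmem : x + t • d ∈ X := by
    convert hX (h z).1 hy (sub_nonneg.2 ht1.le) ht0.le (sub_add_cancel 1 t) using 1
    simp only [d]
    module
  have hle := (h z).2 _ hmem
  have hexpand : cost Q C qi ci (x + t • d) z = cost Q C qi ci x z
      + t * (qi * (x ⬝ᵥ Q *ᵥ d + d ⬝ᵥ Q *ᵥ x) + 2 * ((C *ᵥ z + ci) ⬝ᵥ d)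
        + t * (qi * (d ⬝ᵥ Q *ᵥ d))) := by
    simp only [cost, mulVec_add, mulVec_smul, dotProduct_add, add_dotProduct, dotProduct_smul,
      smul_dotProduct, smul_eq_mul]
    ring
  exact nonneg_of_mul_nonneg_right (by linarith) ht0

theorem IsOptResp.firmlyNonexpansiveWrt {X : Set (Fin n → ℝ)} {Q C : Matrix (Fin n) (Fin n) ℝ}
    {qi : ℝ} {ci : Fin n → ℝ} {xst : (Fin n → ℝ) → Fin n → ℝ} (h : IsOptResp X Q C qi ci xst)
    (hX : Convex ℝ X) (hqQC : (qi • Q + C).PosSemidef) : FirmlyNonexpansiveWrt (-C) xst :=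
  fun z₁ z₂ => by
  -- the two variational inequalities add up to `qi dᵀQd ≤ dᵀ(-C)(z₁ - z₂)` with
  -- `d = xst z₁ - xst z₂`, and `qi Q ⪰ -C`
  have h₁ := h.variational_ineq hX z₁ (h z₂).1
  have h₂ := h.variational_ineq hX z₂ (h z₁).1
  have hpsd := hqQC.dotProduct_mulVec_nonneg (xst z₁ - xst z₂)
  simp only [star_trivial, add_mulVec, neg_mulVec, smul_mulVec, mulVec_sub, dotProduct_add,
    dotProduct_sub, sub_dotProduct, add_dotProduct, dotProduct_neg, dotProduct_smul,
    smul_eq_mul] at h₁ h₂ hpsd ⊢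
  linarith [dotProduct_comm (C *ᵥ z₁) (xst z₁), dotProduct_comm (C *ᵥ z₁) (xst z₂),
    dotProduct_comm (C *ᵥ z₂) (xst z₁), dotProduct_comm (C *ᵥ z₂) (xst z₂)]

theorem FirmlyNonexpansiveWrt.extMap {S : Matrix (Fin n) (Fin n) ℝ}
    {xstar : Fin N → (Fin n → ℝ) → Fin n → ℝ} (h : ∀ i, FirmlyNonexpansiveWrt S (xstar i)) :
    FirmlyNonexpansiveWrt (1 ⊗ₖ S) (extMap xstar) := fun w₁ w₂ => by
  simp only [dotProduct_one_kronecker_mulVec]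
  exact sum_le_sum fun i _ => h i (fun j => w₁ (i, j)) (fun j => w₂ (i, j))

theorem isBounded_range_extMap {X : Fin N → Set (Fin n → ℝ)} (hX : ∀ i, IsBounded (X i))
    {xstar : Fin N → (Fin n → ℝ) → Fin n → ℝ} (hxstar : ∀ i z, xstar i z ∈ X i) :
    IsBounded (range (extMap xstar)) := by
  obtain ⟨r, hr⟩ := isBounded_iff_forall_norm_le.1 (isBounded_iUnion.2 hX)
  refine isBounded_iff_forall_norm_le.2 ⟨max r 0, ?_⟩
  rintro _ ⟨w, rfl⟩
  refine (pi_norm_le_iff_of_nonneg (le_max_right r 0)).2 fun p => ?_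
  exact (norm_le_pi_norm _ p.2).trans
    ((hr _ (mem_iUnion.2 ⟨p.1, hxstar _ _⟩)).trans (le_max_left r 0))

end BestResponse

theorem picardBanach_halfAgg_converges_general {n N ν : ℕ}
    (hνeven : Even ν)
    (X : Fin N → Set (Fin n → ℝ))
    (hXconv : ∀ i, Convex ℝ (X i))
    (hXcpt : ∀ i, IsCompact (X i))
    (Q C : Matrix (Fin n) (Fin n) ℝ)
    (q : Fin N → ℝ) (c : Fin N → Fin n → ℝ)
    (P : Matrix (Fin N) (Fin N) ℝ) (hPnn : ∀ i j, 0 ≤ P i j)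
    (hPrs : ∀ i, ∑ j, P i j = 1) (hPsym : P.IsSymm)
    (hC : (-C).PosDef) (hqQC : ∀ i, (q i • Q + C).PosSemidef)
    (xstar : Fin N → (Fin n → ℝ) → (Fin n → ℝ))
    (hxstar : ∀ i, IsOptResp (X i) Q C (q i) (c i) (xstar i)) :
    ∀ z0 : Fin N × Fin n → ℝ, ∃ a : Fin N × Fin n → ℝ,
      aggMap P ν xstar a = a ∧
      Tendsto
        (fun k => ((P ^ (ν / 2)) ⊗ₖ (1 : Matrix (Fin n) (Fin n) ℝ)).mulVec
          ((halfAgg P (ν / 2) xstar)^[k] z0))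
        atTop (𝓝 a) := by
  intro z0
  obtain ⟨m, rfl⟩ := hνeven
  rw [show (m + m) / 2 = m by omega]
  set K := (P ^ m) ⊗ₖ (1 : Matrix (Fin n) (Fin n) ℝ)
  have hP : P ∈ doublyStochastic ℝ (Fin N) :=
    mem_doublyStochastic_iff_sum.2 ⟨hPnn, hPrs, fun j => by simpa [hPsym.apply] using hPrs j⟩
  have hKsymm : Kᵀ = K := by rw [← kroneckerMap_transpose, (hPsym.pow m).eq, transpose_one]
  have hKcomm : Commute K (1 ⊗ₖ (-C)) := by
    simp only [K, Commute, SemiconjBy, ← mul_kronecker_mul, one_mul, mul_one]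
  have hH : FirmlyNonexpansiveWrt (1 ⊗ₖ (-C)) (halfAgg P m xstar) :=
    (FirmlyNonexpansiveWrt.extMap fun i =>
      (hxstar i).firmlyNonexpansiveWrt (hXconv i) (hqQC i)).mulVec_comp_mulVec hKsymm hKcomm
      (kronecker_one_mulVec_dotProduct_le (pow_mem hP m) hC.posSemidef)
  have hbdd : IsBounded (range (halfAgg P m xstar)) :=
    ((mulVecLin K).toContinuousLinearMap.lipschitz.isBounded_image
      (isBounded_range_extMap (fun i => (hXcpt i).isBounded) fun i z => (hxstar i z).1)).subset
      (by rintro _ ⟨z, rfl⟩; exact ⟨_, mem_range_self _, rfl⟩)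
  obtain ⟨z, hz, hlim⟩ := hH.tendsto_iterate (PosDef.one.kronecker hC) hbdd z0
  refine ⟨K *ᵥ z, ?_, ((continuous_const.matrix_mulVec continuous_id).tendsto z).comp hlim⟩
  calc aggMap P (m + m) xstar (K *ᵥ z) = K *ᵥ halfAgg P m xstar z := by
        rw [aggMap, halfAgg, mulVec_mulVec, pow_add, ← mul_kronecker_mul, one_mul]
    _ = K *ᵥ z := by rw [hz.eq]

/-- Theorem 3, case 3: if `ν` is even, `P = Pᵀ`, `C` symmetric negative
definite with `−q_i Q ⪯ C`, then the Picard–Banach iteration of `A_{ν/2,ν/2}` produces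
estimates `(P^{ν/2} ⊗ I_n) z_k` converging to a fixed point of `A_ν`. -/
theorem picardBanach_halfAgg_converges {n N ν : ℕ} (hn : 0 < n) (hN : 0 < N) (hν : 0 < ν)
    (hνeven : Even ν)
    (X : Fin N → Set (Fin n → ℝ))
    (hXne : ∀ i, (X i).Nonempty) (hXconv : ∀ i, Convex ℝ (X i))
    (hXcpt : ∀ i, IsCompact (X i))
    (Q C : Matrix (Fin n) (Fin n) ℝ) (hQ : Q.PosDef)
    (q : Fin N → ℝ) (hq : ∀ i, 0 < q i) (c : Fin N → Fin n → ℝ)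
    (P : Matrix (Fin N) (Fin N) ℝ) (hPnn : ∀ i j, 0 ≤ P i j)
    (hPrs : ∀ i, ∑ j, P i j = 1) (hPsym : P.IsSymm)
    (hC : (-C).PosDef) (hqQC : ∀ i, (q i • Q + C).PosSemidef)
    (xstar : Fin N → (Fin n → ℝ) → (Fin n → ℝ))
    (hxstar : ∀ i, IsOptResp (X i) Q C (q i) (c i) (xstar i)) :
    ∀ z0 : Fin N × Fin n → ℝ, ∃ a : Fin N × Fin n → ℝ,
      aggMap P ν xstar a = a ∧
      Tendsto
        (fun k => ((P ^ (ν / 2)) ⊗ₖ (1 : Matrix (Fin n) (Fin n) ℝ)).mulVec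
          ((halfAgg P (ν / 2) xstar)^[k] z0))
        atTop (𝓝 a) :=
  picardBanach_halfAgg_converges_general hνeven X hXconv hXcpt Q C q c P hPnn hPrs hPsym hC hqQC
    xstar hxstar
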